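/- For all natural numbers n and k with k > n, the 2k-th derivative at the origin of the n-fold iterate 𝒫ⁿh vanishes: (𝒫ⁿh)^{(2k)}(0) = 0. -/

import Mathlib

open MeasureTheory Set

/-- The function `h(x) = 2/(1 + e^{x/2})`. -/
noncomputable def h (x : ℝ) : ℝ := 2 / (1 + Real.exp (x / 2))

/-- The operator `𝒫`, defined by `(𝒫 f)(x) = ∫_x^∞ t·f(t) dt`. -/
noncomputable def P (f : ℝ → ℝ) : ℝ → ℝ := fun x => ∫ t in Set.Ioi x, t * f t

open scoped ContDiff

namespace PHaux

/-- Two-sided exponential-type bound. -/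
def Bnd (a C : ℝ) (g : ℝ → ℝ) : Prop := ∀ x, |g x| ≤ C * Real.exp (a * |x| - x / 2)

/-- Good functions: continuous with a bound `C e^{a|x| - x/2}`, `0 ≤ a < 1/2`. -/
def Good (f : ℝ → ℝ) : Prop :=
  Continuous f ∧ ∃ a C : ℝ, 0 ≤ a ∧ a < 1/2 ∧ 0 ≤ C ∧ Bnd a C f

lemma abs_le_exp {ε : ℝ} (hε : 0 < ε) (t : ℝ) : |t| ≤ ε⁻¹ * Real.exp (ε * |t|) := by
  have h1 : ε * |t| + 1 ≤ Real.exp (ε * |t|) := Real.add_one_le_exp _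
  have h2 : ε * |t| ≤ Real.exp (ε * |t|) := by linarith
  calc |t| = ε⁻¹ * (ε * |t|) := by field_simp
    _ ≤ ε⁻¹ * Real.exp (ε * |t|) := by
        apply mul_le_mul_of_nonneg_left h2 (by positivity)

lemma Bnd.mul_id {a C : ℝ} {f : ℝ → ℝ} (ha0 : 0 ≤ a) (ha : a < 1/2) (hC : 0 ≤ C)
    (hb : Bnd a C f) :
    Bnd ((a + 1/2)/2) (((1/2 - a)/2)⁻¹ * C) (fun t => t * f t) := by
  intro x
  set ε : ℝ := (1/2 - a)/2 with hεdef
  have hε : 0 < ε := by simp only [hεdef]; linarith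
  have h1 : |x * f x| = |x| * |f x| := abs_mul _ _
  have h2 : |x| * |f x| ≤ (ε⁻¹ * Real.exp (ε * |x|)) * (C * Real.exp (a * |x| - x/2)) := by
    apply mul_le_mul (abs_le_exp hε x) (hb x) (abs_nonneg _) (by positivity)
  rw [h1]
  refine h2.trans (le_of_eq ?_)
  rw [show ε⁻¹ * Real.exp (ε * |x|) * (C * Real.exp (a * |x| - x / 2))
      = ε⁻¹ * C * (Real.exp (ε * |x|) * Real.exp (a * |x| - x / 2)) from by ring,
    ← Real.exp_add]
  congr 2
  simp only [hεdef]; ring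

lemma bnd_integrableOn {g : ℝ → ℝ} {a C : ℝ} (hg : Continuous g) (ha : a < 1/2)
    (hb : Bnd a C g) (x : ℝ) : IntegrableOn g (Ioi x) := by
  set M := max x 0 with hM
  have hM0 : (0:ℝ) ≤ M := le_max_right _ _
  have hxM : x ≤ M := le_max_left _ _
  have h1 : IntegrableOn g (Ioi M) := by
    have hexp : IntegrableOn (fun t => C * Real.exp (-(1/2 - a) * t)) (Ioi M) :=
      (exp_neg_integrableOn_Ioi M (by linarith)).const_mul C
    refine Integrable.mono hexp hg.aestronglyMeasurable ?_
    rw [ae_restrict_iff' measurableSet_Ioi]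
    refine Filter.Eventually.of_forall fun t ht => ?_
    have ht0 : 0 ≤ t := le_trans hM0 (le_of_lt ht)
    have hbt := hb t
    rw [abs_of_nonneg ht0] at hbt
    have heq : a * t - t/2 = -(1/2 - a) * t := by ring
    rw [heq] at hbt
    have hC : 0 ≤ C := by
      by_contra hneg
      have := (abs_nonneg (g 0)).trans (hb 0)
      nlinarith [Real.exp_pos (a * |(0:ℝ)| - 0/2)]
    simp only [Real.norm_eq_abs]
    exact hbt.trans (le_abs_self _)
  rw [← Ioc_union_Ioi_eq_Ioi hxM, integrableOn_union]
  exact ⟨hg.integrableOn_Ioc, h1⟩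

lemma exp_integrand_nonneg (c : ℝ) : ∀ t : ℝ, 0 ≤ Real.exp (c * t) := fun t => (Real.exp_pos _).le

set_option maxHeartbeats 1000000 in
/-- Tail integral bound. -/
lemma tail_bnd {g : ℝ → ℝ} {a C : ℝ} (hg : Continuous g) (ha0 : 0 ≤ a) (ha : a < 1/2)
    (hC : 0 ≤ C) (hb : Bnd a C g) :
    ∃ C' : ℝ, 0 ≤ C' ∧ Bnd ((a + 1/2)/2) C' (fun x => ∫ t in Ioi x, g t) := by
  set a' : ℝ := (a + 1/2)/2 with ha'def
  set ε : ℝ := a' - a with hεdef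
  have hε : 0 < ε := by simp only [hεdef, ha'def]; linarith
  have ha'1 : a' < 1/2 := by simp only [ha'def]; linarith
  have ha'0 : 0 ≤ a' := by simp only [ha'def]; linarith
  set K : ℝ := ∫ t in Ioi (0:ℝ), Real.exp (-ε * t) with hKdef
  set K₂ : ℝ := ∫ t in Ioi (0:ℝ), Real.exp (-(1/2 - a) * t) with hK2def
  have hK0 : 0 ≤ K := setIntegral_nonneg measurableSet_Ioi fun t _ => (Real.exp_pos _).le
  have hK20 : 0 ≤ K₂ := setIntegral_nonneg measurableSet_Ioi fun t _ => (Real.exp_pos _).le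
  have hgi : ∀ x, IntegrableOn g (Ioi x) := bnd_integrableOn hg ha hb
  refine ⟨C * K + C * ε⁻¹ + C * K₂, by positivity, fun x => ?_⟩
  rcases le_or_gt 0 x with hx | hx
  · -- x ≥ 0
    have hbound : ∀ t ∈ Ioi x, |g t| ≤ C * Real.exp (a' * x - x/2) * Real.exp (-ε * t) := by
      intro t ht
      have htx : x ≤ t := le_of_lt ht
      have ht0 : 0 ≤ t := hx.trans htx
      have hbt := hb t
      rw [abs_of_nonneg ht0] at hbt
      refine hbt.trans ?_
      rw [mul_assoc, ← Real.exp_add]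
      apply mul_le_mul_of_nonneg_left _ hC
      apply Real.exp_le_exp.mpr
      have : a' * x - x / 2 + -ε * t - (a * t - t / 2) = (1/2 - a') * (t - x) := by
        simp only [hεdef]; ring
      nlinarith [mul_nonneg (by linarith : (0:ℝ) ≤ 1/2 - a') (by linarith : (0:ℝ) ≤ t - x)]
    have hexpint : IntegrableOn (fun t => C * Real.exp (a' * x - x/2) * Real.exp (-ε * t))
        (Ioi x) := (exp_neg_integrableOn_Ioi x hε).const_mul _
    have h1 : |∫ t in Ioi x, g t| ≤ ∫ t in Ioi x, |g t| := by
      simpa [Real.norm_eq_abs] using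
        norm_integral_le_integral_norm (μ := volume.restrict (Ioi x)) g
    have h2 : ∫ t in Ioi x, |g t| ≤
        ∫ t in Ioi x, C * Real.exp (a' * x - x/2) * Real.exp (-ε * t) := by
      refine setIntegral_mono_on (hgi x).abs hexpint measurableSet_Ioi ?_
      exact fun t ht => hbound t ht
    have h3 : (∫ t in Ioi x, C * Real.exp (a' * x - x/2) * Real.exp (-ε * t))
        = C * Real.exp (a' * x - x/2) * ∫ t in Ioi x, Real.exp (-ε * t) := by
      exact integral_const_mul _ _
    have h4 : (∫ t in Ioi x, Real.exp (-ε * t)) ≤ K := by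
      refine setIntegral_mono_set (exp_neg_integrableOn_Ioi 0 hε) ?_ ?_
      · exact Filter.Eventually.of_forall fun t => (Real.exp_pos _).le
      · exact HasSubset.Subset.eventuallyLE (Ioi_subset_Ioi hx)
    have h5 : C * Real.exp (a' * x - x/2) * (∫ t in Ioi x, Real.exp (-ε * t))
        ≤ C * K * Real.exp (a' * x - x/2) := by
      have := mul_le_mul_of_nonneg_left h4 (by positivity : 0 ≤ C * Real.exp (a' * x - x/2))
      nlinarith [Real.exp_pos (a' * x - x/2)]
    have habs : |x| = x := abs_of_nonneg hx
    calc |∫ t in Ioi x, g t| ≤ C * K * Real.exp (a' * x - x/2) := by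
          rw [h3] at h2; linarith
      _ ≤ (C * K + C * ε⁻¹ + C * K₂) * Real.exp (a' * |x| - x/2) := by
          rw [habs]
          apply mul_le_mul_of_nonneg_right _ (Real.exp_pos _).le
          have h6 : 0 ≤ C * ε⁻¹ := by positivity
          have h7 : 0 ≤ C * K₂ := mul_nonneg hC hK20
          linarith
  · -- x < 0
    have hxle : x ≤ 0 := hx.le
    have hsplit : (∫ t in Ioi x, g t) = (∫ t in Ioc x 0, g t) + ∫ t in Ioi 0, g t := by
      rw [← setIntegral_union (Ioc_disjoint_Ioi le_rfl) measurableSet_Ioi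
        ((hgi x).mono_set Ioc_subset_Ioi_self) (hgi 0), Ioc_union_Ioi_eq_Ioi hxle]
    have hIoc : |∫ t in Ioc x 0, g t| ≤ (C * Real.exp ((a + 1/2) * (-x))) * (-x) := by
      have hvol : (volume (Ioc x 0)).toReal = -x := by
        rw [Real.volume_Ioc, ENNReal.toReal_ofReal (by linarith)]
        ring
      have hlt : volume (Ioc x 0) < ⊤ := by
        rw [Real.volume_Ioc]; exact ENNReal.ofReal_lt_top
      have hptwise : ∀ t ∈ Ioc x 0, ‖g t‖ ≤ C * Real.exp ((a + 1/2) * (-x)) := by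
        intro t ht
        have htx : x ≤ t := (ht.1).le
        have ht0 : t ≤ 0 := ht.2
        have hbt := hb t
        rw [abs_of_nonpos ht0] at hbt
        rw [Real.norm_eq_abs]
        refine hbt.trans ?_
        apply mul_le_mul_of_nonneg_left _ hC
        apply Real.exp_le_exp.mpr
        nlinarith [mul_nonneg (by linarith : (0:ℝ) ≤ a + 1/2) (by linarith : (0:ℝ) ≤ t - x)]
      have := norm_setIntegral_le_of_norm_le_const hlt hptwise
      rwa [Real.norm_eq_abs, measureReal_def, hvol] at this
    have hIoi0 : |∫ t in Ioi 0, g t| ≤ C * K₂ := by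
      have h1 : |∫ t in Ioi 0, g t| ≤ ∫ t in Ioi 0, |g t| := by
        simpa [Real.norm_eq_abs] using
          norm_integral_le_integral_norm (μ := volume.restrict (Ioi 0)) g
      have h2 : ∫ t in Ioi 0, |g t| ≤ ∫ t in Ioi 0, C * Real.exp (-(1/2 - a) * t) := by
        refine setIntegral_mono_on (hgi 0).abs
          ((exp_neg_integrableOn_Ioi 0 (by linarith)).const_mul C) measurableSet_Ioi ?_
        intro t ht
        have ht0 : 0 ≤ t := (le_of_lt ht)
        have hbt := hb t
        rw [abs_of_nonneg ht0] at hbt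
        refine hbt.trans (le_of_eq ?_)
        congr 1; ring
      have h3 : (∫ t in Ioi 0, C * Real.exp (-(1/2 - a) * t)) = C * K₂ := integral_const_mul _ _
      linarith
    have habs : |x| = -x := abs_of_nonpos hxle
    have hxb : -x ≤ ε⁻¹ * Real.exp (ε * (-x)) := by
      have := abs_le_exp hε x
      rwa [habs] at this
    have hfin : |∫ t in Ioi x, g t| ≤
        (C * Real.exp ((a + 1/2) * (-x))) * (-x) + C * K₂ := by
      rw [hsplit]
      exact (abs_add_le _ _).trans (add_le_add hIoc hIoi0)
    have hexp1 : (C * Real.exp ((a + 1/2) * (-x))) * (-x)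
        ≤ C * ε⁻¹ * Real.exp (a' * |x| - x/2) := by
      have h1 : (C * Real.exp ((a + 1/2) * (-x))) * (-x)
          ≤ (C * Real.exp ((a + 1/2) * (-x))) * (ε⁻¹ * Real.exp (ε * (-x))) :=
        mul_le_mul_of_nonneg_left hxb (by positivity)
      refine h1.trans (le_of_eq ?_)
      rw [habs]
      rw [show C * Real.exp ((a + 1/2) * (-x)) * (ε⁻¹ * Real.exp (ε * (-x)))
          = C * ε⁻¹ * (Real.exp ((a + 1/2) * (-x)) * Real.exp (ε * (-x))) by ring,
        ← Real.exp_add]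
      congr 2
      simp only [hεdef, ha'def]; ring
    have hexp2 : C * K₂ ≤ C * K₂ * Real.exp (a' * |x| - x/2) := by
      nlinarith [Real.one_le_exp (by nlinarith [abs_nonneg x, habs] :
        (0:ℝ) ≤ a' * |x| - x/2), mul_nonneg hC hK20]
    calc |∫ t in Ioi x, g t| ≤ C * ε⁻¹ * Real.exp (a' * |x| - x/2)
          + C * K₂ * Real.exp (a' * |x| - x/2) := by linarith
      _ ≤ (C * K + C * ε⁻¹ + C * K₂) * Real.exp (a' * |x| - x/2) := by
          nlinarith [Real.exp_pos (a' * |x| - x/2), mul_nonneg hC hK0]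


lemma Good.tf {f : ℝ → ℝ} (hf : Good f) :
    ∃ a C : ℝ, 0 ≤ a ∧ a < 1/2 ∧ 0 ≤ C ∧ Bnd a C (fun t => t * f t) := by
  obtain ⟨hc, a, C, ha0, ha, hC, hb⟩ := hf
  refine ⟨(a + 1/2)/2, ((1/2 - a)/2)⁻¹ * C, by linarith, by linarith, ?_,
    hb.mul_id ha0 ha hC⟩
  have : (0:ℝ) < (1/2 - a)/2 := by linarith
  positivity

lemma Good.integrableOn_tf {f : ℝ → ℝ} (hf : Good f) (x : ℝ) :
    IntegrableOn (fun t => t * f t) (Ioi x) := by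
  obtain ⟨a, C, _, ha, _, hb⟩ := hf.tf
  exact bnd_integrableOn (continuous_id.mul hf.1) ha hb x

lemma P_eq {f : ℝ → ℝ} (hf : Good f) (x : ℝ) :
    P f x = (∫ t in Ioi (0:ℝ), t * f t) - ∫ t in (0:ℝ)..x, t * f t := by
  have hgi := hf.integrableOn_tf
  rcases le_or_gt 0 x with hx | hx
  · rw [intervalIntegral.integral_of_le hx]
    have hsplit : (∫ t in Ioi (0:ℝ), t * f t)
        = (∫ t in Ioc 0 x, t * f t) + ∫ t in Ioi x, t * f t := by
      rw [← setIntegral_union (Ioc_disjoint_Ioi le_rfl) measurableSet_Ioi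
        ((hgi 0).mono_set Ioc_subset_Ioi_self) (hgi x), Ioc_union_Ioi_eq_Ioi hx]
    simp only [P]; rw [hsplit]; ring
  · rw [intervalIntegral.integral_symm, intervalIntegral.integral_of_le hx.le]
    have hsplit : (∫ t in Ioi x, t * f t)
        = (∫ t in Ioc x 0, t * f t) + ∫ t in Ioi 0, t * f t := by
      rw [← setIntegral_union (Ioc_disjoint_Ioi le_rfl) measurableSet_Ioi
        ((hgi x).mono_set Ioc_subset_Ioi_self) (hgi 0), Ioc_union_Ioi_eq_Ioi hx.le]
    simp only [P]; rw [hsplit]; ring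

lemma P_hasDerivAt {f : ℝ → ℝ} (hf : Good f) (x : ℝ) :
    HasDerivAt (P f) (-(x * f x)) x := by
  have hcont : Continuous (fun t => t * f t) := continuous_id.mul hf.1
  have heq : P f = fun y => (∫ t in Ioi (0:ℝ), t * f t) - ∫ t in (0:ℝ)..y, t * f t :=
    funext (P_eq hf)
  rw [heq]
  have hder : HasDerivAt (fun y => ∫ t in (0:ℝ)..y, t * f t) (x * f x) x :=
    intervalIntegral.integral_hasDerivAt_right (hcont.intervalIntegrable 0 x)
      hcont.aestronglyMeasurable.stronglyMeasurableAtFilter hcont.continuousAt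
  exact hder.const_sub _

lemma P_differentiable {f : ℝ → ℝ} (hf : Good f) : Differentiable ℝ (P f) :=
  fun x => (P_hasDerivAt hf x).differentiableAt

lemma deriv_P {f : ℝ → ℝ} (hf : Good f) : deriv (P f) = fun x => -(x * f x) :=
  funext fun x => (P_hasDerivAt hf x).deriv

lemma Good.P {f : ℝ → ℝ} (hf : Good f) : Good (P f) := by
  refine ⟨(P_differentiable hf).continuous, ?_⟩
  obtain ⟨a, C, ha0, ha, hC, hb⟩ := hf.tf
  obtain ⟨C', hC', hb'⟩ := tail_bnd (continuous_id.mul hf.1) ha0 ha hC hb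
  exact ⟨(a + 1/2)/2, C', by linarith, by linarith, hC', hb'⟩

/-- Smooth good functions. -/
def GG (f : ℝ → ℝ) : Prop := ContDiff ℝ ∞ f ∧ Good f

lemma GG.P {f : ℝ → ℝ} (hf : GG f) : GG (P f) := by
  refine ⟨?_, hf.2.P⟩
  rw [contDiff_infty_iff_deriv]
  refine ⟨P_differentiable hf.2, ?_⟩
  rw [deriv_P hf.2]
  exact ((contDiff_id.mul hf.1).neg :)

lemma h_smooth : ContDiff ℝ ∞ h := by
  have hd : ∀ x : ℝ, 1 + Real.exp (x / 2) ≠ 0 := by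
    intro x; positivity
  exact contDiff_const.div
    (contDiff_const.add (Real.contDiff_exp.comp (contDiff_id.div_const 2))) hd

lemma h_nonneg (x : ℝ) : 0 ≤ h x := by
  unfold h
  positivity

lemma h_good : Good h := by
  refine ⟨h_smooth.continuous, 1/4, 2, by norm_num, by norm_num, by norm_num, fun x => ?_⟩
  rw [abs_of_nonneg (h_nonneg x)]
  unfold h
  have hE : 0 < Real.exp (x / 2) := Real.exp_pos _
  have h1 : 2 / (1 + Real.exp (x / 2)) ≤ 2 / Real.exp (x / 2) := by
    apply div_le_div_of_nonneg_left (by norm_num) hE (by linarith)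
  have h2 : 2 / Real.exp (x / 2) = 2 * Real.exp (-(x/2)) := by
    rw [Real.exp_neg]; ring
  have h3 : Real.exp (-(x/2)) ≤ Real.exp (1/4 * |x| - x/2) := by
    apply Real.exp_le_exp.mpr
    have := abs_nonneg x
    linarith
  calc 2 / (1 + Real.exp (x / 2)) ≤ 2 * Real.exp (-(x/2)) := by rw [← h2]; exact h1
    _ ≤ 2 * Real.exp (1/4 * |x| - x/2) := by linarith
  
lemma GG_h : GG h := ⟨h_smooth, h_good⟩

lemma GG_iter (n : ℕ) : GG (P^[n] h) := by
  induction n with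
  | zero => exact GG_h
  | succ n ih => rw [Function.iterate_succ_apply']; exact ih.P

lemma contDiff_nat_of_infty {f : ℝ → ℝ} (hf : ContDiff ℝ ∞ f) (n : ℕ) : ContDiff ℝ n f :=
  hf.of_le (by exact_mod_cast le_top)

lemma itd_add {n : ℕ} {f g : ℝ → ℝ} (hf : ContDiff ℝ n f) (hg : ContDiff ℝ n g) (x : ℝ) :
    iteratedDeriv n (fun y => f y + g y) x = iteratedDeriv n f x + iteratedDeriv n g x := by
  simp only [← iteratedDerivWithin_univ]
  exact iteratedDerivWithin_add (mem_univ x) uniqueDiffOn_univ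
    hf.contDiffWithinAt hg.contDiffWithinAt

lemma deriv_mul_id {f : ℝ → ℝ} (hf : ContDiff ℝ ∞ f) :
    deriv (fun x => x * f x) = fun x => f x + x * deriv f x := by
  funext x
  have h1 : HasDerivAt (fun x : ℝ => x * f x) (1 * f x + x * deriv f x) x :=
    (hasDerivAt_id x).mul (hf.differentiable (by simp) x).hasDerivAt
  rw [h1.deriv]; ring

lemma itd_mul_id (m : ℕ) : ∀ (f : ℝ → ℝ), ContDiff ℝ ∞ f →
    iteratedDeriv (m + 1) (fun x => x * f x) 0 = (m + 1 : ℝ) * iteratedDeriv m f 0 := by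
  induction m with
  | zero =>
    intro f hf
    rw [iteratedDeriv_one, deriv_mul_id hf]
    simp
  | succ m ih =>
    intro f hf
    have hf' : ContDiff ℝ ∞ (deriv f) := (contDiff_infty_iff_deriv.mp hf).2
    rw [iteratedDeriv_succ', deriv_mul_id hf]
    rw [itd_add (f := f) (g := fun x => x * deriv f x)
      (contDiff_nat_of_infty hf _)
      (contDiff_nat_of_infty ((contDiff_id.mul hf') :) _) 0]
    rw [ih (deriv f) hf', ← iteratedDeriv_succ']
    push_cast
    ring

lemma itd_P {f : ℝ → ℝ} (hf : GG f) (m : ℕ) :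
    iteratedDeriv (m + 2) (P f) 0 = -((m + 1 : ℝ) * iteratedDeriv m f 0) := by
  rw [show m + 2 = (m + 1) + 1 from rfl, iteratedDeriv_succ', deriv_P hf.2]
  rw [show (fun x : ℝ => -(x * f x)) = fun x : ℝ => -((fun y : ℝ => y * f y) x) from rfl]
  have hneg : iteratedDeriv (m+1) (fun x : ℝ => -((fun y : ℝ => y * f y) x)) 0
      = -iteratedDeriv (m+1) (fun y : ℝ => y * f y) 0 := iteratedDeriv_neg _ _ _
  rw [hneg, itd_mul_id m f hf.1]

lemma h_odd (x : ℝ) : h (-x) = 2 - h x := by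
  unfold h
  have hE : 0 < Real.exp (x / 2) := Real.exp_pos _
  have hne : 1 + Real.exp (x/2) ≠ 0 := by positivity
  rw [show (-x)/2 = -(x/2) by ring, Real.exp_neg]
  have hne2 : 1 + (Real.exp (x/2))⁻¹ ≠ 0 := by positivity
  field_simp
  ring

lemma itd_const (m : ℕ) (c : ℝ) (x : ℝ) :
    iteratedDeriv (m + 1) (fun _ : ℝ => c) x = 0 := by
  induction m generalizing c x with
  | zero => simp [iteratedDeriv_one]
  | succ m ih =>
    rw [iteratedDeriv_succ']
    have : deriv (fun _ : ℝ => c) = fun _ : ℝ => (0:ℝ) := by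
      funext y; exact deriv_const y c
    rw [this]
    exact ih 0 x

lemma itd_h_even (k : ℕ) (hk : 1 ≤ k) : iteratedDeriv (2 * k) h 0 = 0 := by
  set g : ℝ → ℝ := fun x => h x + (-1) with hgdef
  have hgs : ContDiff ℝ (2*k : ℕ) g := (contDiff_nat_of_infty h_smooth _).add contDiff_const
  have hgodd : (fun x => g (-x)) = fun x => -(g x) := by
    funext x
    simp only [hgdef, h_odd]
    ring
  obtain ⟨m, hm⟩ : ∃ m, 2 * k = m + 1 := ⟨2*k - 1, by omega⟩
  have h1 : iteratedDeriv (2*k) h 0 = iteratedDeriv (2*k) g 0 := by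
    have := itd_add (n := 2*k) (f := h) (g := fun _ : ℝ => (-1:ℝ))
      (contDiff_nat_of_infty h_smooth _) contDiff_const (0:ℝ)
    rw [hgdef]
    rw [this, hm, itd_const m (-1) 0, add_zero]
  have h2 : iteratedDeriv (2*k) (fun x => g (-x)) 0
      = (-1 : ℝ) ^ (2*k) • iteratedDeriv (2*k) g (-0) := iteratedDeriv_comp_neg _ _ _
  rw [hgodd] at h2
  have h3 : iteratedDeriv (2*k) (fun x => -(g x)) 0 = -iteratedDeriv (2*k) g 0 :=
    iteratedDeriv_neg _ _ _
  have h4 : (-1 : ℝ) ^ (2*k) = 1 := by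
    rw [pow_mul]; norm_num
  rw [h3, h4, neg_zero, one_smul] at h2
  have : iteratedDeriv (2*k) g 0 = 0 := by linarith
  rw [h1, this]

end PHaux

/-- For `k > n`, the `2k`-th derivative of `𝒫ⁿh` vanishes at the origin. -/
theorem iteratedDeriv_P_iterate_h_vanish (n k : ℕ) (hk : n < k) :
    iteratedDeriv (2 * k) (P^[n] h) 0 = 0 := by
  induction n generalizing k with
  | zero =>
    exact PHaux.itd_h_even k (by omega)
  | succ n ih =>
    obtain ⟨j, rfl⟩ : ∃ j, k = j + 1 := ⟨k - 1, by omega⟩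
    have hnj : n < j := by omega
    rw [Function.iterate_succ_apply']
    have hm : 2 * (j + 1) = 2 * j + 2 := by ring
    rw [hm, PHaux.itd_P (PHaux.GG_iter n) (2*j), ih j hnj, mul_zero, neg_zero]
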